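/- arXiv:1412.2522 — 3 statements merged into one kernel-verified Lean document; each statement's English description precedes it below -/
import Mathlib

section
/- Comparison inequality: for a finite graph G, if q'≥q, q'≥1 and p'≤p, then the random-cluster measure φ_{p',q'} is stochastically smaller than φ_{p,q}, i.e. φ_{p',q'}(f) ≤ φ_{p,q}(f) for every increasing function f on {0,1}^E. -/
/-!
By Holley's inequality it suffices to check the lattice condition
`φ_{p',q'}(A) φ_{p,q}(B) ≤ φ_{p',q'}(A ∩ B) φ_{p,q}(A ∪ B)` for `A, B ⊆ E`.
Writing the weight of `A` as `(1-p)^|E| (p/(1-p))^|A| q^k(A)`, the edge factors compare because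
`|A| + |B| = |A ∩ B| + |A ∪ B|` and `p'/(1-p') ≤ p/(1-p)`, and the cluster factors because `k` is
antitone and supermodular while `q ≤ q'` and `1 ≤ q'`. Supermodularity of `k`: an added edge lowers
`k` by one if its endpoints are not yet connected and by zero otherwise, so it lowers `k` at least as
much in a smaller graph.
-/

open scoped BigOperators Classical

noncomputable section

/-- Number of connected components (including isolated vertices) of the graph `(V, A)`. -/
def numComp {V : Type} [Fintype V] (A : Finset (Sym2 V)) : ℕ :=
  Nat.card (SimpleGraph.fromEdgeSet (A : Set (Sym2 V))).ConnectedComponent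

/-- Random-cluster weight of the configuration with open edge-set `A ⊆ E`. -/
def rcWeight {V : Type} [Fintype V] (E : Finset (Sym2 V)) (p q : ℝ)
    (A : Finset (Sym2 V)) : ℝ :=
  p ^ A.card * (1 - p) ^ (E.card - A.card) * q ^ numComp A

/-- Random-cluster partition function. -/
def ZRC {V : Type} [Fintype V] (E : Finset (Sym2 V)) (p q : ℝ) : ℝ :=
  ∑ A ∈ E.powerset, rcWeight E p q A

/-- Potts weight `exp(β · #{monochromatic edges})` of a spin configuration `σ`. -/
def pottsWeight {V : Type} [Fintype V] [DecidableEq V] (E : Finset (Sym2 V)) (β : ℝ) (q : ℕ)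
    (σ : V → Fin q) : ℝ :=
  Real.exp (β * ((E.filter (fun e => (e.map σ).IsDiag)).card : ℝ))

/-- Potts partition function. -/
def ZP {V : Type} [Fintype V] [DecidableEq V] (E : Finset (Sym2 V)) (β : ℝ) (q : ℕ) : ℝ :=
  ∑ σ : V → Fin q, pottsWeight E β q σ

/-- The event `F`: the spin configuration `σ` is constant on every open edge of `A`. -/
def consistent {V : Type} (q : ℕ) (σ : V → Fin q) (A : Finset (Sym2 V)) : Prop :=
  ∀ e ∈ A, (e.map σ).IsDiag

/-- Weight of the Potts/random-cluster coupling measure `μ(σ, ω) ∝ ψ(σ) φ_p(ω) 1_F(σ,ω)`. -/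
def muWeight {V : Type} [Fintype V] (E : Finset (Sym2 V)) (p : ℝ) (q : ℕ)
    (σ : V → Fin q) (A : Finset (Sym2 V)) : ℝ :=
  ((q : ℝ) ^ Fintype.card V)⁻¹ * (p ^ A.card * (1 - p) ^ (E.card - A.card)) *
    (if consistent q σ A then 1 else 0)

/-- Normalising constant of the coupling measure. -/
def Zmu {V : Type} [Fintype V] [DecidableEq V] (E : Finset (Sym2 V)) (p : ℝ) (q : ℕ) : ℝ :=
  ∑ σ : V → Fin q, ∑ A ∈ E.powerset, muWeight E p q σ A

/-- Expectation of `f` under the random-cluster measure `φ_{p,q}`. -/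
def rcExp {V : Type} [Fintype V] (E : Finset (Sym2 V)) (p q : ℝ)
    (f : Finset (Sym2 V) → ℝ) : ℝ :=
  (∑ A ∈ E.powerset, rcWeight E p q A * f A) / ZRC E p q

namespace SimpleGraph

variable {V : Type} {G G' : SimpleGraph V} {u v x y : V}

theorem Reachable.of_sup_edge (h : (G ⊔ edge u v).Reachable x y) :
    G.Reachable x y ∨ G.Reachable x u ∧ G.Reachable v y ∨ G.Reachable x v ∧ G.Reachable u y := by
  obtain ⟨w⟩ := h
  induction w with
  | nil => exact Or.inl .rfl
  | @cons a b c hadj _ ih =>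
    rcases hadj with hG | hE
    · have hab := hG.reachable
      rcases ih with h | ⟨h₁, h₂⟩ | ⟨h₁, h₂⟩
      · exact Or.inl (hab.trans h)
      · exact Or.inr (Or.inl ⟨hab.trans h₁, h₂⟩)
      · exact Or.inr (Or.inr ⟨hab.trans h₁, h₂⟩)
    · obtain ⟨⟨rfl, rfl⟩ | ⟨rfl, rfl⟩, -⟩ := (edge_adj _ _ _ _).mp hE
      · rcases ih with h | ⟨h₁, h₂⟩ | ⟨-, h₂⟩
        · exact Or.inr (Or.inl ⟨.rfl, h⟩)
        · exact Or.inl (h₁.symm.trans h₂)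
        · exact Or.inl h₂
      · rcases ih with h | ⟨-, h₂⟩ | ⟨h₁, h₂⟩
        · exact Or.inr (Or.inr ⟨.rfl, h⟩)
        · exact Or.inl h₂
        · exact Or.inl (h₁.symm.trans h₂)

theorem card_connectedComponent_sup_edge_of_reachable (h : G.Reachable u v) :
    Nat.card (G ⊔ edge u v).ConnectedComponent = Nat.card G.ConnectedComponent := by
  refine (Nat.card_eq_of_bijective _
    ⟨fun c d hcd ↦ ?_, ConnectedComponent.surjective_map_ofLE le_sup_left⟩).symm
  induction c using ConnectedComponent.ind with | _ a
  induction d using ConnectedComponent.ind with | _ b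
  refine ConnectedComponent.eq.mpr ?_
  rcases (ConnectedComponent.eq.mp hcd).of_sup_edge with hab | ⟨h₁, h₂⟩ | ⟨h₁, h₂⟩
  · exact hab
  · exact h₁.trans (h.trans h₂)
  · exact h₁.trans (h.symm.trans h₂)

theorem card_connectedComponent_sup_edge_add_one [Finite V] (h : ¬ G.Reachable u v) :
    Nat.card (G ⊔ edge u v).ConnectedComponent + 1 = Nat.card G.ConnectedComponent := by
  have hle : G ≤ G ⊔ edge u v := le_sup_left
  have huv : (G ⊔ edge u v).Adj u v :=
    Or.inr ((edge_adj _ _ _ _).mpr ⟨Or.inl ⟨rfl, rfl⟩, fun e ↦ h (e ▸ .rfl)⟩)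
  let φ : ({G.connectedComponentMk v}ᶜ : Set G.ConnectedComponent) →
      (G ⊔ edge u v).ConnectedComponent := fun c ↦ c.1.map (Hom.ofLE hle)
  have hφ : Function.Bijective φ := by
    constructor
    · rintro ⟨c, hc⟩ ⟨d, hd⟩ hcd
      induction c using ConnectedComponent.ind with | _ a
      induction d using ConnectedComponent.ind with | _ b
      have hav : ¬ G.Reachable a v := fun r ↦ hc (ConnectedComponent.eq.mpr r)
      have hbv : ¬ G.Reachable b v := fun r ↦ hd (ConnectedComponent.eq.mpr r)
      refine Subtype.ext (ConnectedComponent.eq.mpr ?_)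
      rcases (ConnectedComponent.eq.mp hcd).of_sup_edge with hab | ⟨-, h₂⟩ | ⟨h₁, -⟩
      · exact hab
      · exact absurd h₂.symm hbv
      · exact absurd h₁ hav
    · intro c
      induction c using ConnectedComponent.ind with | _ a
      by_cases hav : G.Reachable a v
      · refine ⟨⟨G.connectedComponentMk u, fun e ↦ h (ConnectedComponent.eq.mp e)⟩, ?_⟩
        exact ConnectedComponent.eq.mpr (huv.reachable.trans (hav.mono hle).symm)
      · exact ⟨⟨G.connectedComponentMk a, fun e ↦ hav (ConnectedComponent.eq.mp e)⟩, rfl⟩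
  rw [← Nat.card_eq_of_bijective φ hφ, Nat.card_coe_set_eq, add_comm, ← Set.ncard_singleton
    (G.connectedComponentMk v), Set.ncard_add_ncard_compl]

theorem card_connectedComponent_sup_edge_add_le [Finite V] (hGG' : G ≤ G') :
    Nat.card (G ⊔ edge u v).ConnectedComponent + Nat.card G'.ConnectedComponent ≤
      Nat.card G.ConnectedComponent + Nat.card (G' ⊔ edge u v).ConnectedComponent := by
  by_cases hG : G.Reachable u v
  · rw [card_connectedComponent_sup_edge_of_reachable hG,
      card_connectedComponent_sup_edge_of_reachable (hG.mono hGG')]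
  · have := card_connectedComponent_sup_edge_add_one hG
    by_cases hG' : G'.Reachable u v
    · rw [card_connectedComponent_sup_edge_of_reachable hG']
      omega
    · have := card_connectedComponent_sup_edge_add_one hG'
      omega

theorem fromEdgeSet_insert_eq_sup_edge (s : Set (Sym2 V)) :
    fromEdgeSet (insert s(u, v) s) = fromEdgeSet s ⊔ edge u v := by
  rw [Set.insert_eq, fromEdgeSet_union, sup_comm]
  rfl

end SimpleGraph

section numComp

variable {V : Type} [Fintype V]

theorem numComp_anti {A B : Finset (Sym2 V)} (h : A ⊆ B) : numComp B ≤ numComp A :=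
  SimpleGraph.ConnectedComponent.card_le_card_of_le
    (SimpleGraph.fromEdgeSet_mono (by exact_mod_cast h))

theorem numComp_insert_add_le {A B : Finset (Sym2 V)} (hAB : A ⊆ B) (e : Sym2 V) :
    numComp (insert e A) + numComp B ≤ numComp A + numComp (insert e B) := by
  induction e with
  | _ u v =>
    simp only [numComp, Finset.coe_insert, SimpleGraph.fromEdgeSet_insert_eq_sup_edge]
    exact SimpleGraph.card_connectedComponent_sup_edge_add_le
      (SimpleGraph.fromEdgeSet_mono (by exact_mod_cast hAB))

theorem numComp_add_numComp_union_le {A C : Finset (Sym2 V)} (hCA : C ⊆ A)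
    (D : Finset (Sym2 V)) : numComp A + numComp (C ∪ D) ≤ numComp C + numComp (A ∪ D) := by
  induction D using Finset.induction_on with
  | empty => simp only [Finset.union_empty, add_comm, le_refl]
  | insert e D _ ih =>
    have := numComp_insert_add_le (Finset.union_subset_union_left (t := D) hCA) e
    rw [Finset.union_insert, Finset.union_insert]
    omega

theorem numComp_add_numComp_le (A B : Finset (Sym2 V)) :
    numComp A + numComp B ≤ numComp (A ∩ B) + numComp (A ∪ B) := by
  simpa only [Finset.union_eq_right.mpr Finset.inter_subset_right] using
    numComp_add_numComp_union_le (Finset.inter_subset_left (s₂ := B)) B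

end numComp

theorem pow_mul_pow_le_pow_mul_pow {x y : ℝ} (hx : 0 ≤ x) (hxy : x ≤ y) {a b i u : ℕ}
    (hia : i ≤ a) (h : i + u = a + b) : x ^ a * y ^ b ≤ x ^ i * y ^ u := by
  have hy := hx.trans hxy
  obtain ⟨d, rfl⟩ := Nat.exists_eq_add_of_le hia
  obtain rfl : u = b + d := by omega
  calc x ^ (i + d) * y ^ b = x ^ i * y ^ b * x ^ d := by ring
    _ ≤ x ^ i * y ^ b * y ^ d := by gcongr
    _ = x ^ i * y ^ (b + d) := by ring

theorem pow_mul_pow_le_pow_mul_pow_of_one_le {x y : ℝ} (hx : 0 ≤ x) (hxy : x ≤ y) (hy : 1 ≤ y)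
    {a b i u : ℕ} (hub : u ≤ b) (h : a + b ≤ i + u) : y ^ a * x ^ b ≤ y ^ i * x ^ u := by
  obtain ⟨m, rfl⟩ := Nat.exists_eq_add_of_le hub
  obtain ⟨n, rfl⟩ : ∃ n, i = a + n := ⟨i - a, by omega⟩
  calc y ^ a * x ^ (u + m) = y ^ a * x ^ u * x ^ m := by ring
    _ ≤ y ^ a * x ^ u * y ^ n := by
      gcongr
      exact (pow_le_pow_left₀ hx hxy m).trans (pow_le_pow_right₀ hy (by omega))
    _ = y ^ (a + n) * x ^ u := by ring

section rcWeight

variable {V : Type} [Fintype V] {E A B : Finset (Sym2 V)} {p p' q q' : ℝ}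

theorem rcWeight_nonneg (hp : p ∈ Set.Icc (0 : ℝ) 1) (hq : 0 ≤ q) (A : Finset (Sym2 V)) :
    0 ≤ rcWeight E p q A := by
  obtain ⟨hp0, hp1⟩ := hp
  have := sub_nonneg.mpr hp1
  unfold rcWeight
  positivity

theorem ZRC_pos (hp : p ∈ Set.Ico (0 : ℝ) 1) (hq : 0 < q) : 0 < ZRC E p q := by
  refine Finset.sum_pos' (fun A _ ↦ rcWeight_nonneg (Set.Ico_subset_Icc_self hp) hq.le A)
    ⟨∅, Finset.empty_mem_powerset E, ?_⟩
  have := sub_pos.mpr hp.2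
  simp only [rcWeight, Finset.card_empty, pow_zero, one_mul, Nat.sub_zero]
  positivity

theorem rcWeight_eq_of_subset (hp : p ≠ 1) (hA : A ⊆ E) :
    rcWeight E p q A = (1 - p) ^ E.card * ((p / (1 - p)) ^ A.card * q ^ numComp A) := by
  have : 1 - p ≠ 0 := sub_ne_zero.mpr hp.symm
  rw [rcWeight, ← pow_sub_mul_pow (1 - p) (Finset.card_le_card hA), div_pow]
  field_simp

theorem rcWeight_mul_rcWeight_le (hp : p < 1) (hp' : p' ∈ Set.Ico (0 : ℝ) 1)
    (hpp : p' ≤ p) (hq : 0 ≤ q) (hqq : q ≤ q') (hq1 : 1 ≤ q') (hA : A ⊆ E) (hB : B ⊆ E) :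
    rcWeight E p' q' A * rcWeight E p q B ≤
      rcWeight E p' q' (A ∩ B) * rcWeight E p q (A ∪ B) := by
  have hAB := Finset.union_subset hA hB
  rw [rcWeight_eq_of_subset hp'.2.ne hA, rcWeight_eq_of_subset hp.ne hB,
    rcWeight_eq_of_subset hp'.2.ne (Finset.inter_subset_left.trans hA),
    rcWeight_eq_of_subset hp.ne hAB]
  have h1p := sub_pos.mpr hp
  have h1p' := sub_pos.mpr hp'.2
  have hr' : 0 ≤ p' / (1 - p') := div_nonneg hp'.1 h1p'.le
  have hrr : p' / (1 - p') ≤ p / (1 - p) :=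
    div_le_div₀ (hp'.1.trans hpp) hpp h1p (by linarith)
  have hedges := pow_mul_pow_le_pow_mul_pow hr' hrr
    (Finset.card_le_card Finset.inter_subset_left) (Finset.card_inter_add_card_union A B)
  have hclusters := pow_mul_pow_le_pow_mul_pow_of_one_le hq hqq hq1
    (numComp_anti Finset.subset_union_right) (numComp_add_numComp_le A B)
  calc _ = (1 - p') ^ E.card * (1 - p) ^ E.card *
        ((p' / (1 - p')) ^ A.card * (p / (1 - p)) ^ B.card) *
        (q' ^ numComp A * q ^ numComp B) := by ring
    _ ≤ (1 - p') ^ E.card * (1 - p) ^ E.card *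
        ((p' / (1 - p')) ^ (A ∩ B).card * (p / (1 - p)) ^ (A ∪ B).card) *
        (q' ^ numComp (A ∩ B) * q ^ numComp (A ∪ B)) := by
      have hr := hr'.trans hrr
      have hq' := hq.trans hqq
      exact mul_le_mul (mul_le_mul_of_nonneg_left hedges (by positivity)) hclusters
        (by positivity) (by positivity)
    _ = _ := by ring

end rcWeight

theorem Finset.holley_powerset {α : Type*} [DecidableEq α] (u : Finset α)
    {f g μ : Finset α → ℝ} (hf : 0 ≤ f) (hg : 0 ≤ g) (hμ : MonotoneOn μ u.powerset)
    (h : ∀ ⦃s⦄, s ⊆ u → ∀ ⦃t⦄, t ⊆ u → f s * g t ≤ f (s ∩ t) * g (s ∪ t)) :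
    (∑ s ∈ u.powerset, g s) * ∑ s ∈ u.powerset, f s * μ s ≤
      (∑ s ∈ u.powerset, f s) * ∑ s ∈ u.powerset, g s * μ s := by
  -- The four functions theorem wants nonnegative functions on all of `Finset α`.
  set ν : Finset α → ℝ := fun s ↦ μ (s ∩ u) - μ ∅
  have hν_mem : ∀ s, s ∩ u ∈ u.powerset := fun s ↦ mem_powerset.mpr inter_subset_right
  have hν₀ : 0 ≤ ν := fun s ↦
    sub_nonneg.mpr (hμ (empty_mem_powerset u) (hν_mem s) (empty_subset _))
  have hν_sum (w : Finset α → ℝ) :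
      ∑ s ∈ u.powerset, (ν * w) s =
        ∑ s ∈ u.powerset, w s * μ s - μ ∅ * ∑ s ∈ u.powerset, w s := by
    rw [mul_sum, ← sum_sub_distrib]
    refine sum_congr rfl fun s hs ↦ ?_
    simp only [Pi.mul_apply, ν, inter_eq_left.mpr (mem_powerset.mp hs)]
    ring
  have key := u.four_functions_theorem (f₁ := g) (f₂ := ν * f) (f₃ := f) (f₄ := ν * g) hg
    (mul_nonneg hν₀ hf) hf (mul_nonneg hν₀ hg) (fun s hs t ht ↦ ?_) subset_rfl subset_rfl
  · rw [powerset_infs_powerset_self, powerset_sups_powerset_self, hν_sum, hν_sum] at key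
    linear_combination key
  · simp only [Pi.mul_apply]
    rw [inter_comm, union_comm]
    calc g s * (ν t * f t) = ν t * (f t * g s) := by ring
      _ ≤ ν (t ∪ s) * (f (t ∩ s) * g (t ∪ s)) :=
        mul_le_mul (sub_le_sub_right (hμ (hν_mem t) (hν_mem _)
          (inter_subset_inter subset_union_left subset_rfl)) _) (h ht hs)
          (mul_nonneg (hf _) (hg _)) (hν₀ _)
      _ = _ := by ring

theorem rc_comparison_le_general {V : Type} [Fintype V]
    (E : Finset (Sym2 V))
    (p p' q q' : ℝ) (hp : p ∈ Set.Ioo (0 : ℝ) 1) (hp' : p' ∈ Set.Ioo (0 : ℝ) 1)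
    (hq : 0 < q) (hqq : q ≤ q') (hq1 : 1 ≤ q') (hpp : p' ≤ p)
    (f : Finset (Sym2 V) → ℝ)
    (hf : ∀ A B : Finset (Sym2 V), A ⊆ B → B ⊆ E → f A ≤ f B) :
    rcExp E p' q' f ≤ rcExp E p q f := by
  have hq' : 0 < q' := zero_lt_one.trans_le hq1
  have holley := E.holley_powerset (μ := f)
    (fun A ↦ rcWeight_nonneg (Set.Ioo_subset_Icc_self hp') hq'.le A)
    (fun A ↦ rcWeight_nonneg (Set.Ioo_subset_Icc_self hp) hq.le A)
    (fun A _ B hB hAB ↦ hf A B hAB (Finset.mem_powerset.mp hB))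
    (fun A hA B hB ↦ rcWeight_mul_rcWeight_le hp.2 (Set.Ioo_subset_Ico_self hp') hpp hq.le hqq
      hq1 hA hB)
  rw [rcExp, rcExp, div_le_div_iff₀ (ZRC_pos (Set.Ioo_subset_Ico_self hp') hq')
    (ZRC_pos (Set.Ioo_subset_Ico_self hp) hq)]
  unfold ZRC
  linear_combination holley

/-- Comparison inequality: if `q' ≥ q`, `q' ≥ 1` and `p' ≤ p`, then `φ_{p',q'}` is
stochastically smaller than `φ_{p,q}`. -/
theorem rc_comparison_le {V : Type} [Fintype V] [DecidableEq V]
    (E : Finset (Sym2 V)) (hE : ∀ e ∈ E, ¬ e.IsDiag)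
    (p p' q q' : ℝ) (hp : p ∈ Set.Ioo (0 : ℝ) 1) (hp' : p' ∈ Set.Ioo (0 : ℝ) 1)
    (hq : 0 < q) (hqq : q ≤ q') (hq1 : 1 ≤ q') (hpp : p' ≤ p)
    (f : Finset (Sym2 V) → ℝ)
    (hf : ∀ A B : Finset (Sym2 V), A ⊆ B → B ⊆ E → f A ≤ f B) :
    rcExp E p' q' f ≤ rcExp E p q f :=
  rc_comparison_le_general E p p' q q' hp hp' hq hqq hq1 hpp f hf
end
end

section
/- Comparison inequality: for a finite graph G, if q'≥q, q'≥1 and p'/(q'(1-p')) ≥ p/(q(1-p)), then φ_{p',q'} is stochastically larger than φ_{p,q}. -/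
open scoped BigOperators Classical

noncomputable section

set_option linter.unusedSectionVars false
set_option maxHeartbeats 1000000

open SimpleGraph

namespace RCaux

variable {V : Type} [Fintype V]

lemma reach_sup_edge {G : SimpleGraph V} {a b x y : V}
    (h : (G ⊔ fromEdgeSet {s(a,b)}).Reachable x y) :
    G.Reachable x y ∨ (G.Reachable x a ∧ G.Reachable b y) ∨
      (G.Reachable x b ∧ G.Reachable a y) := by
  obtain ⟨w⟩ := h
  induction w with
  | nil => exact Or.inl (Reachable.refl _)
  | @cons x z y h p ih =>
    rcases h with h | h
    · rcases ih with h1 | ⟨h1, h2⟩ | ⟨h1, h2⟩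
      · exact Or.inl (h.reachable.trans h1)
      · exact Or.inr (Or.inl ⟨h.reachable.trans h1, h2⟩)
      · exact Or.inr (Or.inr ⟨h.reachable.trans h1, h2⟩)
    · rw [fromEdgeSet_adj] at h
      obtain ⟨he, hne⟩ := h
      simp only [Set.mem_singleton_iff, Sym2.eq_iff] at he
      rcases he with ⟨rfl, rfl⟩ | ⟨rfl, rfl⟩
      · rcases ih with h1 | ⟨h1, h2⟩ | ⟨h1, h2⟩
        · exact Or.inr (Or.inl ⟨Reachable.refl _, h1⟩)
        · exact Or.inr (Or.inl ⟨Reachable.refl _, h2⟩)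
        · exact Or.inl h2
      · rcases ih with h1 | ⟨h1, h2⟩ | ⟨h1, h2⟩
        · exact Or.inr (Or.inr ⟨Reachable.refl _, h1⟩)
        · exact Or.inl h2
        · exact Or.inr (Or.inr ⟨Reachable.refl _, h2⟩)

instance (G : SimpleGraph V) : Finite G.ConnectedComponent :=
  Finite.of_surjective (G.connectedComponentMk) Quot.mk_surjective

lemma map_surjective {G G' : SimpleGraph V} (h : G ≤ G') :
    Function.Surjective
      (ConnectedComponent.map (Hom.ofLE h)) := by
  intro c
  exact ConnectedComponent.ind (fun v => ⟨G.connectedComponentMk v, rfl⟩) c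

lemma card_comp_le {G G' : SimpleGraph V} (h : G ≤ G') :
    Nat.card G'.ConnectedComponent ≤ Nat.card G.ConnectedComponent :=
  Nat.card_le_card_of_surjective _ (map_surjective h)

lemma card_comp_sup_edge_of_reachable {G : SimpleGraph V} {a b : V}
    (hr : G.Reachable a b) :
    Nat.card (G ⊔ fromEdgeSet {s(a,b)}).ConnectedComponent
      = Nat.card G.ConnectedComponent := by
  refine (Nat.card_eq_of_bijective
    (ConnectedComponent.map (Hom.ofLE le_sup_left)) ⟨?_, map_surjective _⟩).symm
  intro c d
  refine ConnectedComponent.ind₂ (fun x y hxy => ?_) c d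
  simp only [ConnectedComponent.map_mk, Hom.ofLE, ConnectedComponent.eq] at hxy ⊢
  rcases reach_sup_edge hxy with h1 | ⟨h1, h2⟩ | ⟨h1, h2⟩
  · exact h1
  · exact (h1.trans hr).trans h2
  · exact (h1.trans hr.symm).trans h2

lemma card_comp_sup_edge_of_not_reachable {G : SimpleGraph V} {a b : V}
    (hab : a ≠ b) (hr : ¬ G.Reachable a b) :
    Nat.card G.ConnectedComponent
      = Nat.card (G ⊔ fromEdgeSet {s(a,b)}).ConnectedComponent + 1 := by
  set G' := G ⊔ fromEdgeSet {s(a,b)} with hG'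
  set φ : G.ConnectedComponent → G'.ConnectedComponent :=
    ConnectedComponent.map (Hom.ofLE le_sup_left) with hφ
  have hφmk : ∀ v : V, φ (G.connectedComponentMk v) = G'.connectedComponentMk v := fun v => rfl
  have hreach : ∀ {x y : V}, G'.Reachable x y →
      G.Reachable x y ∨ (G.Reachable x a ∧ G.Reachable b y) ∨
        (G.Reachable x b ∧ G.Reachable a y) := fun h => reach_sup_edge h
  haveI : Fintype G.ConnectedComponent := Fintype.ofFinite _
  haveI : Fintype G'.ConnectedComponent := Fintype.ofFinite _
  have hab' : G'.Reachable a b := by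
    refine Adj.reachable ?_
    rw [hG', sup_adj, fromEdgeSet_adj]
    exact Or.inr ⟨rfl, hab⟩
  have hcard : ∀ d : G'.ConnectedComponent,
      Fintype.card {c : G.ConnectedComponent // φ c = d}
        = if d = G'.connectedComponentMk a then 2 else 1 := by
    intro d
    split_ifs with hd
    · subst hd
      rw [← Nat.card_eq_fintype_card, Nat.card_eq_two_iff]
      refine ⟨⟨G.connectedComponentMk a, rfl⟩,
        ⟨G.connectedComponentMk b, ?_⟩, ?_, ?_⟩
      · exact ConnectedComponent.sound hab'.symm
      · intro hcontra
        exact hr (ConnectedComponent.exact (congrArg Subtype.val hcontra))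
      · rw [Set.eq_univ_iff_forall]
        rintro ⟨c, hc⟩
        obtain ⟨x, rfl⟩ := c.exists_rep
        have hx : G'.connectedComponentMk x = G'.connectedComponentMk a := hc
        rw [ConnectedComponent.eq] at hx
        simp only [Set.mem_insert_iff, Set.mem_singleton_iff]
        rcases hreach hx with h1 | ⟨h1, _⟩ | ⟨h1, _⟩
        · exact Or.inl (Subtype.ext (ConnectedComponent.sound h1))
        · exact Or.inl (Subtype.ext (ConnectedComponent.sound h1))
        · exact Or.inr (Subtype.ext (ConnectedComponent.sound h1))
    · rw [Fintype.card_eq_one_iff]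
      obtain ⟨c₀, hc₀⟩ := map_surjective (le_sup_left : G ≤ G') d
      obtain ⟨y, rfl⟩ := c₀.exists_rep
      refine ⟨⟨_, hc₀⟩, ?_⟩
      rintro ⟨c, hc⟩
      obtain ⟨x, rfl⟩ := c.exists_rep
      refine Subtype.ext ?_
      have hx : G'.connectedComponentMk x = d := hc
      have hy : G'.connectedComponentMk y = d := hc₀
      have hxy : G'.Reachable x y := ConnectedComponent.exact (hx.trans hy.symm)
      rcases hreach hxy with h1 | ⟨h1, _⟩ | ⟨_, h2⟩
      · exact ConnectedComponent.sound h1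
      · exact absurd (by rw [← hx]; exact ConnectedComponent.sound (h1.mono le_sup_left)) hd
      · exact absurd (by rw [← hy]; exact ConnectedComponent.sound (h2.mono le_sup_left).symm) hd
  have h1 : Nat.card G.ConnectedComponent
      = ∑ d : G'.ConnectedComponent, Fintype.card {c : G.ConnectedComponent // φ c = d} := by
    rw [Nat.card_eq_fintype_card, ← Fintype.card_sigma,
      Fintype.card_congr (Equiv.sigmaFiberEquiv φ)]
  rw [h1]
  have h2 : ∀ d : G'.ConnectedComponent,
      Fintype.card {c : G.ConnectedComponent // φ c = d}
        = 1 + (if d = G'.connectedComponentMk a then 1 else 0) := by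
    intro d; rw [hcard d]; split_ifs <;> rfl
  simp_rw [h2]
  rw [Finset.sum_add_distrib, Finset.sum_const, Finset.sum_ite_eq' Finset.univ
    (G'.connectedComponentMk a) (fun _ => (1:ℕ))]
  simp [Nat.card_eq_fintype_card, mul_comm, Nat.add_comm]


variable [DecidableEq (Sym2 V)]

lemma numComp_mono {A B : Finset (Sym2 V)} (h : A ⊆ B) :
    numComp B ≤ numComp A :=
  card_comp_le (fromEdgeSet_mono (Finset.coe_subset.mpr h))

lemma fromEdgeSet_insert_eq (A : Finset (Sym2 V)) (e : Sym2 V) :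
    fromEdgeSet ((insert e A : Finset (Sym2 V)) : Set (Sym2 V))
      = fromEdgeSet (A : Set (Sym2 V)) ⊔ fromEdgeSet {e} := by
  rw [Finset.coe_insert, Set.insert_eq, Set.union_comm, fromEdgeSet_union]

lemma numComp_insert_of_reachable {A : Finset (Sym2 V)} {a b : V}
    (h : (fromEdgeSet (A : Set (Sym2 V))).Reachable a b) :
    numComp (insert s(a,b) A) = numComp A := by
  unfold numComp
  rw [fromEdgeSet_insert_eq]
  exact card_comp_sup_edge_of_reachable h

lemma numComp_insert_of_not_reachable {A : Finset (Sym2 V)} {a b : V} (hab : a ≠ b)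
    (h : ¬ (fromEdgeSet (A : Set (Sym2 V))).Reachable a b) :
    numComp A = numComp (insert s(a,b) A) + 1 := by
  unfold numComp
  rw [fromEdgeSet_insert_eq]
  exact card_comp_sup_edge_of_not_reachable hab h

lemma numComp_le_insert_add_one (A : Finset (Sym2 V)) {a b : V} (hab : a ≠ b) :
    numComp A ≤ numComp (insert s(a,b) A) + 1 := by
  by_cases h : (fromEdgeSet (A : Set (Sym2 V))).Reachable a b
  · rw [numComp_insert_of_reachable h]; omega
  · exact (numComp_insert_of_not_reachable hab h).le

lemma numComp_single_submod {X Y : Finset (Sym2 V)} (hXY : X ⊆ Y) {a b : V} (hab : a ≠ b) :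
    numComp Y + numComp (insert s(a,b) X) ≤ numComp X + numComp (insert s(a,b) Y) := by
  by_cases hx : (fromEdgeSet (X : Set (Sym2 V))).Reachable a b
  · have hy : (fromEdgeSet (Y : Set (Sym2 V))).Reachable a b :=
      hx.mono (fromEdgeSet_mono (Finset.coe_subset.mpr hXY))
    rw [numComp_insert_of_reachable hx, numComp_insert_of_reachable hy]
    omega
  · have e1 := numComp_insert_of_not_reachable hab hx
    by_cases hy : (fromEdgeSet (Y : Set (Sym2 V))).Reachable a b
    · have e2 := numComp_insert_of_reachable hy
      omega
    · have e2 := numComp_insert_of_not_reachable hab hy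
      omega

lemma numComp_supermod_aux {X Y : Finset (Sym2 V)} (D : Finset (Sym2 V)) (hXY : X ⊆ Y)
    (hD : ∀ e ∈ D, ¬ e.IsDiag) :
    numComp Y + numComp (X ∪ D) ≤ numComp X + numComp (Y ∪ D) := by
  induction D using Finset.induction with
  | empty => simp only [Finset.union_empty]; omega
  | @insert e D hnot ih =>
    rw [Finset.union_insert, Finset.union_insert]
    have hD' : ∀ e' ∈ D, ¬ e'.IsDiag := fun e' he' => hD e' (Finset.mem_insert_of_mem he')
    have h2 := ih hD'
    induction e using Sym2.ind with
    | _ a b =>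
      have hab : a ≠ b := by
        have := hD _ (Finset.mem_insert_self _ _)
        rwa [Sym2.mk_isDiag_iff] at this
      have h1 := numComp_single_submod
        (Finset.union_subset_union hXY (Finset.Subset.refl D)) hab
      omega

lemma numComp_drop_bound (X D : Finset (Sym2 V)) (hD : ∀ e ∈ D, ¬ e.IsDiag) :
    numComp X ≤ numComp (X ∪ D) + D.card := by
  induction D using Finset.induction with
  | empty => simp
  | @insert e D hnot ih =>
    rw [Finset.union_insert, Finset.card_insert_of_notMem hnot]
    have hD' : ∀ e' ∈ D, ¬ e'.IsDiag := fun e' he' => hD e' (Finset.mem_insert_of_mem he')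
    have h2 := ih hD'
    induction e using Sym2.ind with
    | _ a b =>
      have hab : a ≠ b := by
        have := hD _ (Finset.mem_insert_self _ _)
        rwa [Sym2.mk_isDiag_iff] at this
      have h1 := numComp_le_insert_add_one (X ∪ D) hab
      omega

lemma inter_union_sdiff_eq (A B : Finset (Sym2 V)) : (A ∩ B) ∪ (A \ B) = A := by
  ext x; simp only [Finset.mem_union, Finset.mem_inter, Finset.mem_sdiff]; tauto

lemma union_sdiff_eq (A B : Finset (Sym2 V)) : B ∪ (A \ B) = A ∪ B := by
  ext x; simp only [Finset.mem_union, Finset.mem_sdiff]; tauto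

lemma numComp_supermod {A B : Finset (Sym2 V)} (hA : ∀ e ∈ A, ¬ e.IsDiag) :
    numComp B + numComp A ≤ numComp (A ∩ B) + numComp (A ∪ B) := by
  have h := numComp_supermod_aux (A \ B) (Finset.inter_subset_right (s₁ := A) (s₂ := B))
    (fun e he => hA e (Finset.mem_sdiff.mp he).1)
  rwa [inter_union_sdiff_eq, union_sdiff_eq] at h

lemma numComp_inter_le {A B : Finset (Sym2 V)} (hA : ∀ e ∈ A, ¬ e.IsDiag) :
    numComp (A ∩ B) ≤ numComp A + (A \ B).card := by
  have h := numComp_drop_bound (A ∩ B) (A \ B) (fun e he => hA e (Finset.mem_sdiff.mp he).1)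
  rwa [inter_union_sdiff_eq] at h

/-- The core numerical inequality. -/
lemma core_ineq {p p' q q' : ℝ} (hp : p ∈ Set.Ioo (0:ℝ) 1) (hp' : p' ∈ Set.Ioo (0:ℝ) 1)
    (hq : 0 < q) (hqq : q ≤ q') (hq1 : 1 ≤ q')
    (hratio : p / (q * (1 - p)) ≤ p' / (q' * (1 - p')))
    {m s t : ℕ} (hts : t ≤ s) (hsm : s ≤ m) :
    p ^ m * (1 - p') ^ m * q' ^ t ≤ (1 - p) ^ m * p' ^ m * q ^ s := by
  obtain ⟨hp0, hp1⟩ := hp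
  obtain ⟨hp'0, hp'1⟩ := hp'
  have h1p : (0:ℝ) < 1 - p := by linarith
  have h1p' : (0:ℝ) < 1 - p' := by linarith
  have hq' : (0:ℝ) < q' := by linarith
  have h1 : p * (q' * (1 - p')) ≤ p' * (q * (1 - p)) := by
    rw [div_le_div_iff₀ (by positivity) (by positivity)] at hratio
    exact hratio
  have h2 : (p * (q' * (1 - p'))) ^ m ≤ (p' * (q * (1 - p))) ^ m :=
    pow_le_pow_left₀ (by positivity) h1 m
  have e1 : (p * (q' * (1 - p'))) ^ m = p ^ m * (1 - p') ^ m * q' ^ m := by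
    rw [mul_pow, mul_pow]; ring
  have e2 : (p' * (q * (1 - p))) ^ m = (1 - p) ^ m * p' ^ m * q ^ m := by
    rw [mul_pow, mul_pow]; ring
  rw [e1, e2] at h2
  have h3 : q ^ (m - s) ≤ q' ^ (m - t) :=
    le_trans (pow_le_pow_left₀ hq.le hqq _) (pow_le_pow_right₀ hq1 (by omega))
  have hfac : (0:ℝ) < q' ^ (m - t) * q ^ (m - s) := by positivity
  refine le_of_mul_le_mul_right ?_ hfac
  have eq1 : q' ^ t * q' ^ (m - t) = q' ^ m := by
    rw [← pow_add]; congr 1; omega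
  have eq2 : q ^ s * q ^ (m - s) = q ^ m := by
    rw [← pow_add]; congr 1; omega
  calc p ^ m * (1 - p') ^ m * q' ^ t * (q' ^ (m - t) * q ^ (m - s))
      = p ^ m * (1 - p') ^ m * (q' ^ t * q' ^ (m - t)) * q ^ (m - s) := by ring
    _ = p ^ m * (1 - p') ^ m * q' ^ m * q ^ (m - s) := by rw [eq1]
    _ ≤ (1 - p) ^ m * p' ^ m * q ^ m * q' ^ (m - t) :=
        mul_le_mul h2 h3 (by positivity) (by positivity)
    _ = (1 - p) ^ m * p' ^ m * (q ^ s * q ^ (m - s)) * q' ^ (m - t) := by rw [eq2]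
    _ = (1 - p) ^ m * p' ^ m * q ^ s * (q' ^ (m - t) * q ^ (m - s)) := by ring

/-- The Holley (lattice) condition for the two random-cluster weights. -/
lemma holley_cond {E : Finset (Sym2 V)} (hE : ∀ e ∈ E, ¬ e.IsDiag)
    {p p' q q' : ℝ} (hp : p ∈ Set.Ioo (0:ℝ) 1) (hp' : p' ∈ Set.Ioo (0:ℝ) 1)
    (hq : 0 < q) (hqq : q ≤ q') (hq1 : 1 ≤ q')
    (hratio : p / (q * (1 - p)) ≤ p' / (q' * (1 - p')))
    {A B : Finset (Sym2 V)} (hA : A ⊆ E) (hB : B ⊆ E) :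
    rcWeight E p q A * rcWeight E p' q' B
      ≤ rcWeight E p q (A ∩ B) * rcWeight E p' q' (A ∪ B) := by
  obtain ⟨hp0, hp1⟩ := hp
  obtain ⟨hp'0, hp'1⟩ := hp'
  have h1p : (0:ℝ) < 1 - p := by linarith
  have h1p' : (0:ℝ) < 1 - p' := by linarith
  have hq' : (0:ℝ) < q' := by linarith
  set m : ℕ := (A \ B).card with hm
  have hAnd : ∀ e ∈ A, ¬ e.IsDiag := fun e he => hE e (hA he)
  -- component count bookkeeping
  have hks : numComp A ≤ numComp (A ∩ B) :=
    numComp_mono (Finset.inter_subset_left)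
  have hkt : numComp (A ∪ B) ≤ numComp B :=
    numComp_mono (Finset.subset_union_right)
  set s : ℕ := numComp (A ∩ B) - numComp A with hs
  set t : ℕ := numComp B - numComp (A ∪ B) with ht
  have hsEq : numComp (A ∩ B) = numComp A + s := by omega
  have htEq : numComp B = numComp (A ∪ B) + t := by omega
  have hsup := numComp_supermod (B := B) hAnd
  have hts : t ≤ s := by omega
  have hineq := numComp_inter_le (B := B) hAnd
  have hsm : s ≤ m := by omega
  -- cardinality bookkeeping
  have hiA : (A ∩ B).card + m = A.card := Finset.card_inter_add_card_sdiff A B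
  have hUB : m + B.card = (A ∪ B).card := Finset.card_sdiff_add_card A B
  have hAE : A.card ≤ E.card := Finset.card_le_card hA
  have hUE : (A ∪ B).card ≤ E.card := Finset.card_le_card (Finset.union_subset hA hB)
  have hcA : A.card = (A ∩ B).card + m := hiA.symm
  have hcI : E.card - (A ∩ B).card = (E.card - A.card) + m := by omega
  have hcU : (A ∪ B).card = B.card + m := by omega
  have hcB : E.card - B.card = (E.card - (A ∪ B).card) + m := by omega
  set C : ℝ := p ^ (A ∩ B).card * (1 - p) ^ (E.card - A.card) * q ^ numComp A
    * (p' ^ B.card * (1 - p') ^ (E.card - (A ∪ B).card) * q' ^ numComp (A ∪ B)) with hC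
  have hC0 : 0 ≤ C := by positivity
  have pA : p ^ A.card = p ^ (A ∩ B).card * p ^ m := by rw [← pow_add, hiA]
  have pB : (1 - p') ^ (E.card - B.card)
      = (1 - p') ^ (E.card - (A ∪ B).card) * (1 - p') ^ m := by rw [← pow_add, ← hcB]
  have pkB : q' ^ numComp B = q' ^ numComp (A ∪ B) * q' ^ t := by rw [← pow_add, ← htEq]
  have pI : (1 - p) ^ (E.card - (A ∩ B).card)
      = (1 - p) ^ (E.card - A.card) * (1 - p) ^ m := by rw [← pow_add, ← hcI]
  have pkI : q ^ numComp (A ∩ B) = q ^ numComp A * q ^ s := by rw [← pow_add, ← hsEq]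
  have pU : p' ^ (A ∪ B).card = p' ^ B.card * p' ^ m := by rw [← pow_add, ← hcU]
  have eL : rcWeight E p q A * rcWeight E p' q' B
      = C * (p ^ m * (1 - p') ^ m * q' ^ t) := by
    rw [rcWeight, rcWeight, pA, pB, pkB, hC]; ring
  have eR : rcWeight E p q (A ∩ B) * rcWeight E p' q' (A ∪ B)
      = C * ((1 - p) ^ m * p' ^ m * q ^ s) := by
    rw [rcWeight, rcWeight, pI, pkI, pU, hC]; ring
  rw [eL, eR]
  exact mul_le_mul_of_nonneg_left
    (core_ineq ⟨hp0, hp1⟩ ⟨hp'0, hp'1⟩ hq hqq hq1 hratio hts hsm) hC0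


end RCaux

/-- Comparison inequality: if `q' ≥ q`, `q' ≥ 1` and `p'/(q'(1-p')) ≥ p/(q(1-p))`, then
`φ_{p',q'}` is stochastically larger than `φ_{p,q}`. -/
theorem rc_comparison_ge {V : Type} [Fintype V] [DecidableEq V]
    (E : Finset (Sym2 V)) (hE : ∀ e ∈ E, ¬ e.IsDiag)
    (p p' q q' : ℝ) (hp : p ∈ Set.Ioo (0 : ℝ) 1) (hp' : p' ∈ Set.Ioo (0 : ℝ) 1)
    (hq : 0 < q) (hqq : q ≤ q') (hq1 : 1 ≤ q')
    (hratio : p / (q * (1 - p)) ≤ p' / (q' * (1 - p')))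
    (f : Finset (Sym2 V) → ℝ)
    (hf : ∀ A B : Finset (Sym2 V), A ⊆ B → B ⊆ E → f A ≤ f B) :
    rcExp E p q f ≤ rcExp E p' q' f := by
  classical
  obtain ⟨hp0, hp1⟩ := hp
  obtain ⟨hp'0, hp'1⟩ := hp'
  have h1p : (0:ℝ) < 1 - p := by linarith
  have h1p' : (0:ℝ) < 1 - p' := by linarith
  have hq' : (0:ℝ) < q' := by linarith
  have hw : ∀ A : Finset (Sym2 V), 0 < rcWeight E p q A := by
    intro A; rw [rcWeight]; positivity
  have hw' : ∀ A : Finset (Sym2 V), 0 < rcWeight E p' q' A := by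
    intro A; rw [rcWeight]; positivity
  have hPne : (E.powerset).Nonempty := ⟨∅, Finset.mem_powerset.mpr (Finset.empty_subset E)⟩
  have hZ : 0 < ZRC E p q := Finset.sum_pos (fun A _ => hw A) hPne
  have hZ' : 0 < ZRC E p' q' := Finset.sum_pos (fun A _ => hw' A) hPne
  set g : Finset (Sym2 V) → ℝ := fun A => if A ⊆ E then f A - f ∅ else 0 with hgdef
  have hg0 : ∀ A, 0 ≤ g A := by
    intro A
    rw [hgdef]
    dsimp only
    split_ifs with h
    · have := hf ∅ A (Finset.empty_subset A) h
      linarith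
    · exact le_refl 0
  have key : (∑ A ∈ E.powerset, rcWeight E p q A * g A) * (∑ B ∈ E.powerset, rcWeight E p' q' B)
      ≤ (∑ A ∈ E.powerset, rcWeight E p q A)
          * (∑ B ∈ E.powerset, rcWeight E p' q' B * g B) := by
    have h4 := Finset.four_functions_theorem (f₁ := fun A => rcWeight E p q A * g A)
      (f₂ := rcWeight E p' q') (f₃ := rcWeight E p q)
      (f₄ := fun A => rcWeight E p' q' A * g A) E
      (fun A => mul_nonneg (hw A).le (hg0 A)) (fun A => (hw' A).le)
      (fun A => (hw A).le) (fun A => mul_nonneg (hw' A).le (hg0 A))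
      ?_ (Finset.Subset.refl _) (Finset.Subset.refl _)
    · rwa [Finset.powerset_infs_powerset_self, Finset.powerset_sups_powerset_self] at h4
    · intro A hA B hB
      have hU : A ∪ B ⊆ E := Finset.union_subset hA hB
      have hgle : g A ≤ g (A ∪ B) := by
        rw [hgdef]
        dsimp only
        rw [if_pos hA, if_pos hU]
        have := hf A (A ∪ B) Finset.subset_union_left hU
        linarith
      calc rcWeight E p q A * g A * rcWeight E p' q' B
          = (rcWeight E p q A * rcWeight E p' q' B) * g A := by ring
        _ ≤ (rcWeight E p q (A ∩ B) * rcWeight E p' q' (A ∪ B)) * g (A ∪ B) := by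
            refine mul_le_mul (RCaux.holley_cond hE ⟨hp0, hp1⟩ ⟨hp'0, hp'1⟩ hq hqq hq1 hratio
              hA hB) hgle (hg0 A) ?_
            exact mul_nonneg (hw _).le (hw' _).le
        _ = rcWeight E p q (A ∩ B) * (rcWeight E p' q' (A ∪ B) * g (A ∪ B)) := by ring
  have hsum : ∀ (pp qq : ℝ), ∑ A ∈ E.powerset, rcWeight E pp qq A * f A
      = ∑ A ∈ E.powerset, rcWeight E pp qq A * g A + f ∅ * ZRC E pp qq := by
    intro pp qq
    rw [ZRC, Finset.mul_sum, ← Finset.sum_add_distrib]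
    refine Finset.sum_congr rfl (fun A hA => ?_)
    rw [hgdef]
    dsimp only
    rw [if_pos (Finset.mem_powerset.mp hA)]
    ring
  have hexp : ∀ (pp qq : ℝ), 0 < ZRC E pp qq → rcExp E pp qq f
      = (∑ A ∈ E.powerset, rcWeight E pp qq A * g A) / ZRC E pp qq + f ∅ := by
    intro pp qq hZpos
    rw [rcExp, hsum, add_div, mul_div_assoc, div_self hZpos.ne', mul_one]
  rw [hexp p q hZ, hexp p' q' hZ']
  have hdiv : (∑ A ∈ E.powerset, rcWeight E p q A * g A) / ZRC E p q
      ≤ (∑ A ∈ E.powerset, rcWeight E p' q' A * g A) / ZRC E p' q' := by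
    rw [div_le_div_iff₀ hZ hZ']
    calc (∑ A ∈ E.powerset, rcWeight E p q A * g A) * ZRC E p' q'
        ≤ ZRC E p q * (∑ A ∈ E.powerset, rcWeight E p' q' A * g A) := key
      _ = (∑ A ∈ E.powerset, rcWeight E p' q' A * g A) * ZRC E p q := by ring
  linarith
end
end

section
/- The flow polynomial is an evaluation of the Tutte polynomial: for any finite graph G=(V,E) and integer q≥2, the number of non-zero mod-q flows satisfies C_G(q) = (-1)^{|E|-|V|+1} T_G(0, 1-q), where for a connected graph T_G is the Tutte polynomial. Equivalently C_G(q) = (-1)^{|E|} Σ_{A⊆E} (-1)^{r(A)} (-q)^{c(A)}. -/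
open scoped BigOperators Classical

noncomputable section

/-- Rank of the subgraph `(V, A)`. -/
def rank {V : Type} [Fintype V] (A : Finset (Sym2 V)) : ℕ :=
  Fintype.card V - numComp A

/-- Corank of the subgraph `(V, A)`. -/
def corank {V : Type} [Fintype V] (A : Finset (Sym2 V)) : ℕ :=
  A.card - rank A

/-- Whitney rank-generating function `W_G(x,y) = Σ_{A⊆E} x^{r(A)} y^{c(A)}`. -/
def whitney {V : Type} [Fintype V] (E : Finset (Sym2 V)) (x y : ℝ) : ℝ :=
  ∑ A ∈ E.powerset, x ^ rank A * y ^ corank A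

/-- Tutte polynomial `T_G(u,v) = (u-1)^{|V|-1} W_G((u-1)⁻¹, v-1)`. -/
def tutte {V : Type} [Fintype V] (E : Finset (Sym2 V)) (u v : ℝ) : ℝ :=
  (u - 1) ^ (Fintype.card V - 1) * whitney E (u - 1)⁻¹ (v - 1)

/-- The number of nowhere-zero mod-`q` flows on the graph with edge set `E`, each edge
`e` oriented from `(o e).1` to `(o e).2`. -/
def flowCount {V : Type} [Fintype V] (E : Finset (Sym2 V)) (o : Sym2 V → V × V)
    (q : ℕ) : ℕ :=
  Nat.card {f : {e // e ∈ E} → ZMod q //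
    (∀ v : V,
      (∑ e : {e // e ∈ E}, if (o e.val).1 = v then f e else 0) =
      (∑ e : {e // e ∈ E}, if (o e.val).2 = v then f e else 0)) ∧
    (∀ e, f e ≠ 0)}

namespace FlowAux

variable {V : Type} [Fintype V] [DecidableEq V]

/-- Boundary map. -/
def bdF (q : ℕ) (o : Sym2 V → V × V) : (Sym2 V → ZMod q) →+ (V → ZMod q) :=
  AddMonoidHom.mk' (fun f v =>
    (∑ e, if (o e).1 = v then f e else 0) - (∑ e, if (o e).2 = v then f e else 0)) (by
    intro f g; funext v
    have key : ∀ (h : Sym2 V → V),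
        (∑ e, if h e = v then f e + g e else 0)
          = (∑ e, if h e = v then f e else 0) + (∑ e, if h e = v then g e else 0) := by
      intro h
      rw [← Finset.sum_add_distrib]
      refine Finset.sum_congr rfl fun e _ => ?_
      by_cases hc : h e = v <;> simp [hc]
    simp only [Pi.add_apply]
    rw [key (fun e => (o e).1), key (fun e => (o e).2)]
    abel)

/-- Functions supported inside `A`. -/
def suppIn (q : ℕ) (A : Finset (Sym2 V)) : AddSubgroup (Sym2 V → ZMod q) where
  carrier := {f | ∀ e ∉ A, f e = 0}
  add_mem' := by intro f g hf hg e he; simp [hf e he, hg e he]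
  zero_mem' := by intro e he; rfl
  neg_mem' := by intro f hf e he; simp [hf e he]

def bdA (q : ℕ) (o : Sym2 V → V × V) (A : Finset (Sym2 V)) :
    suppIn (V := V) q A →+ (V → ZMod q) :=
  (bdF q o).comp (suppIn q A).subtype

def psiF (q : ℕ) (A : Finset (Sym2 V)) :
    (V → ZMod q) →+ ((SimpleGraph.fromEdgeSet (A : Set (Sym2 V))).ConnectedComponent → ZMod q) :=
  AddMonoidHom.mk' (fun x c => ∑ v ∈ Finset.univ.filter
      (fun v => (SimpleGraph.fromEdgeSet (A : Set (Sym2 V))).connectedComponentMk v = c), x v) (by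
    intro x y; funext c; simp [Finset.sum_add_distrib])

lemma card_ker_mul_card_range {G H : Type*} [AddGroup G] [AddGroup H] [Finite G] (f : G →+ H) :
    Nat.card f.ker * Nat.card f.range = Nat.card G := by
  rw [AddSubgroup.card_eq_card_quotient_mul_card_addSubgroup f.ker,
    Nat.card_congr (QuotientAddGroup.quotientKerEquivRange f).toEquiv, mul_comm]


def ind (q : ℕ) (e0 : Sym2 V) (c : ZMod q) : Sym2 V → ZMod q := fun e => if e = e0 then c else 0

def ddc (q : ℕ) (c : ZMod q) (u w : V) : V → ZMod q :=
  fun v => (if u = v then c else 0) - (if w = v then c else 0)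

lemma bdF_ind (q : ℕ) (o : Sym2 V → V × V) (e0 : Sym2 V) (c : ZMod q) :
    bdF q o (ind q e0 c) = ddc q c (o e0).1 (o e0).2 := by
  funext v
  show (∑ e, if (o e).1 = v then ind q e0 c e else 0)
      - (∑ e, if (o e).2 = v then ind q e0 c e else 0) = _
  have key : ∀ h : Sym2 V → V,
      (∑ e, if h e = v then ind q e0 c e else 0) = if h e0 = v then c else 0 := by
    intro h
    rw [Finset.sum_eq_single e0]
    · simp [ind]
    · intro b _ hb; simp [ind, hb]
    · simp
  rw [key, key]; rfl

lemma ind_mem {q : ℕ} {A : Finset (Sym2 V)} {e0 : Sym2 V} (h : e0 ∈ A) (c : ZMod q) :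
    ind q e0 c ∈ suppIn q A := by
  intro e he
  simp only [ind]
  rw [if_neg]
  intro h'
  subst h'
  exact he h

lemma ddc_mem_range (q : ℕ) (o : Sym2 V → V × V) {A E : Finset (Sym2 V)} (hA : A ⊆ E)
    (hE : ∀ e ∈ E, ¬ e.IsDiag) (ho : ∀ e ∈ E, s((o e).1, (o e).2) = e) (c : ZMod q) {u w : V}
    (h : (SimpleGraph.fromEdgeSet (A : Set (Sym2 V))).Reachable u w) :
    ddc q c u w ∈ (bdA q o A).range := by
  obtain ⟨p⟩ := h
  induction p with
  | nil =>
      have hz : ∀ x : V, ddc q c x x = 0 := by intro x; funext v; simp [ddc]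
      rw [hz]; exact (bdA q o A).range.zero_mem
  | @cons a b w hadj p ih =>
      have hsplit : ddc q c a w = ddc q c a b + ddc q c b w := by
        funext v; simp only [ddc, Pi.add_apply]; ring
      rw [hsplit]
      refine AddSubgroup.add_mem _ ?_ ih
      rw [SimpleGraph.fromEdgeSet_adj] at hadj
      obtain ⟨hmem, hne⟩ := hadj
      have he0A : s(a, b) ∈ A := hmem
      have hoe := ho _ (hA he0A)
      rcases Sym2.eq_iff.mp hoe with ⟨h1, h2⟩ | ⟨h1, h2⟩
      · exact ⟨⟨ind q s(a,b) c, ind_mem he0A c⟩, by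
          show bdF q o (ind q s(a,b) c) = _
          rw [bdF_ind, h1, h2]⟩
      · refine ⟨⟨ind q s(a,b) (-c), ind_mem he0A (-c)⟩, ?_⟩
        show bdF q o (ind q s(a,b) (-c)) = _
        rw [bdF_ind, h1, h2]
        funext v; simp only [ddc]; split <;> split <;> ring


lemma range_bdA_eq_ker_psi (q : ℕ) (o : Sym2 V → V × V) {A E : Finset (Sym2 V)} (hA : A ⊆ E)
    (hE : ∀ e ∈ E, ¬ e.IsDiag) (ho : ∀ e ∈ E, s((o e).1, (o e).2) = e) :
    (bdA q o A).range = (psiF q A).ker := by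
  apply le_antisymm
  · rintro y ⟨⟨f, hf⟩, rfl⟩
    rw [AddMonoidHom.mem_ker]
    funext c
    show (∑ v ∈ Finset.univ.filter
        (fun v => (SimpleGraph.fromEdgeSet (A : Set (Sym2 V))).connectedComponentMk v = c),
        bdF q o f v) = 0
    have swap : ∀ h : Sym2 V → V,
        (∑ v ∈ Finset.univ.filter
          (fun v => (SimpleGraph.fromEdgeSet (A : Set (Sym2 V))).connectedComponentMk v = c),
          ∑ e, if h e = v then f e else 0)
        = ∑ e, if (SimpleGraph.fromEdgeSet (A : Set (Sym2 V))).connectedComponentMk (h e) = c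
            then f e else 0 := by
      intro h
      rw [Finset.sum_comm]
      refine Finset.sum_congr rfl fun e _ => ?_
      rw [Finset.sum_ite_eq]
      simp
    have : ∀ v, bdF q o f v
        = (∑ e, if (o e).1 = v then f e else 0) - (∑ e, if (o e).2 = v then f e else 0) :=
      fun _ => rfl
    simp only [this]
    rw [Finset.sum_sub_distrib, swap (fun e => (o e).1), swap (fun e => (o e).2),
      ← Finset.sum_sub_distrib]
    apply Finset.sum_eq_zero
    intro e _
    by_cases heA : e ∈ A
    · have hne : (o e).1 ≠ (o e).2 := by
        intro hcontra
        apply hE e (hA heA)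
        rw [← ho e (hA heA), Sym2.mk_isDiag_iff]
        exact hcontra
      have hadj : (SimpleGraph.fromEdgeSet (A : Set (Sym2 V))).Adj (o e).1 (o e).2 := by
        rw [SimpleGraph.fromEdgeSet_adj]
        refine ⟨?_, hne⟩
        rw [ho e (hA heA)]
        exact heA
      rw [SimpleGraph.ConnectedComponent.connectedComponentMk_eq_of_adj hadj, sub_self]
    · have hfe : f e = 0 := hf e heA
      simp [hfe]
  · intro x hx
    rw [AddMonoidHom.mem_ker] at hx
    classical
    set Gr := SimpleGraph.fromEdgeSet (A : Set (Sym2 V)) with hGr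
    have hfib : ∀ c : Gr.ConnectedComponent,
        (∑ v ∈ Finset.univ.filter (fun v => Gr.connectedComponentMk v = c), x v) = 0 :=
      fun c => congrFun hx c
    set r : V → V := fun v => (Gr.connectedComponentMk v).out with hr
    have hout : ∀ v, Gr.connectedComponentMk (r v) = Gr.connectedComponentMk v := by
      intro v
      exact Quot.out_eq _
    have hxdec : x = ∑ v : V, ddc q (x v) v (r v) := by
      funext u
      rw [Finset.sum_apply]
      have : ∀ v ∈ Finset.univ, (ddc q (x v) v (r v)) u
          = (if v = u then x v else 0) - (if r v = u then x v else 0) := fun v _ => rfl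
      rw [Finset.sum_congr rfl this, Finset.sum_sub_distrib, Finset.sum_ite_eq']
      have h2 : (∑ v : V, if r v = u then x v else 0) = 0 := by
        haveI : Fintype Gr.ConnectedComponent := Fintype.ofFinite _
        rw [← Finset.sum_fiberwise Finset.univ (fun v => Gr.connectedComponentMk v)
          (fun v => if r v = u then x v else 0)]
        apply Finset.sum_eq_zero
        intro c _
        have : ∀ v ∈ Finset.univ.filter (fun v => Gr.connectedComponentMk v = c),
            (if r v = u then x v else 0) = (if c.out = u then x v else 0) := by
          intro v hv
          rw [Finset.mem_filter] at hv
          rw [hr]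
          simp only [hv.2]
        rw [Finset.sum_congr rfl this]
        by_cases hc : c.out = u
        · simp only [hc, if_true]
          exact hfib c
        · simp [hc]
      rw [h2, sub_zero]
      simp
    rw [hxdec]
    apply AddSubgroup.sum_mem
    intro v _
    apply ddc_mem_range q o hA hE ho
    apply SimpleGraph.ConnectedComponent.exact
    rw [hout v]

lemma psi_surjective (q : ℕ) (A : Finset (Sym2 V)) :
    Function.Surjective (psiF (V := V) q A) := by
  intro y
  refine ⟨fun v => if ((SimpleGraph.fromEdgeSet (A : Set (Sym2 V))).connectedComponentMk v).out = v
      then y ((SimpleGraph.fromEdgeSet (A : Set (Sym2 V))).connectedComponentMk v) else 0, ?_⟩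
  funext c
  show (∑ v ∈ Finset.univ.filter
      (fun v => (SimpleGraph.fromEdgeSet (A : Set (Sym2 V))).connectedComponentMk v = c),
      if ((SimpleGraph.fromEdgeSet (A : Set (Sym2 V))).connectedComponentMk v).out = v
        then y ((SimpleGraph.fromEdgeSet (A : Set (Sym2 V))).connectedComponentMk v) else 0) = y c
  have hcong : ∀ v ∈ Finset.univ.filter
      (fun v => (SimpleGraph.fromEdgeSet (A : Set (Sym2 V))).connectedComponentMk v = c),
      (if ((SimpleGraph.fromEdgeSet (A : Set (Sym2 V))).connectedComponentMk v).out = v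
        then y ((SimpleGraph.fromEdgeSet (A : Set (Sym2 V))).connectedComponentMk v) else 0)
        = (if c.out = v then y c else 0) := by
    intro v hv
    rw [Finset.mem_filter] at hv
    rw [hv.2]
  have hoc : (SimpleGraph.fromEdgeSet (A : Set (Sym2 V))).connectedComponentMk c.out = c :=
    Quot.out_eq c
  rw [Finset.sum_congr rfl hcong, Finset.sum_ite_eq]
  simp [hoc]


lemma card_suppIn (q : ℕ) [NeZero q] (A : Finset (Sym2 V)) :
    Nat.card (suppIn (V := V) q A) = q ^ A.card := by
  have e : suppIn (V := V) q A ≃ ({e // e ∈ A} → ZMod q) :=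
    { toFun := fun f e => f.1 e.1
      invFun := fun g => ⟨fun e => if h : e ∈ A then g ⟨e, h⟩ else 0, fun e he => dif_neg he⟩
      left_inv := by
        intro f
        apply Subtype.ext
        funext e
        by_cases h : e ∈ A
        · simp [h]
        · simp [h, f.2 e h]
      right_inv := by
        intro g
        funext e
        simp [e.2] }
  rw [Nat.card_congr e, Nat.card_fun, Nat.card_zmod, Nat.card_eq_fintype_card, Fintype.card_coe]

lemma card_pi_comp (q : ℕ) [NeZero q] (A : Finset (Sym2 V)) :
    Nat.card ((SimpleGraph.fromEdgeSet (A : Set (Sym2 V))).ConnectedComponent → ZMod q)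
      = q ^ numComp A := by
  rw [Nat.card_fun, Nat.card_zmod]
  rfl

lemma numComp_le (A : Finset (Sym2 V)) : numComp A ≤ Fintype.card V := by
  rw [← Nat.card_eq_fintype_card]
  exact Nat.card_le_card_of_surjective
    (SimpleGraph.fromEdgeSet (A : Set (Sym2 V))).connectedComponentMk Quot.mk_surjective

lemma card_ker_bdA (q : ℕ) (hq : 2 ≤ q) (o : Sym2 V → V × V) {A E : Finset (Sym2 V)} (hA : A ⊆ E)
    (hE : ∀ e ∈ E, ¬ e.IsDiag) (ho : ∀ e ∈ E, s((o e).1, (o e).2) = e) :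
    Nat.card (bdA q o A).ker = q ^ corank A ∧ rank A ≤ A.card := by
  haveI : NeZero q := ⟨by omega⟩
  have hqpos : 0 < q := by omega
  have h1 : Nat.card (bdA q o A).ker * Nat.card (bdA q o A).range = q ^ A.card := by
    rw [card_ker_mul_card_range, card_suppIn]
  have h2 : Nat.card (psiF (V := V) q A).ker * q ^ numComp A = q ^ Fintype.card V := by
    have h := card_ker_mul_card_range (psiF (V := V) q A)
    rw [AddMonoidHom.range_eq_top.mpr (psi_surjective q A), AddSubgroup.card_top,
      card_pi_comp q A] at h
    rw [h, Nat.card_fun, Nat.card_zmod, Nat.card_eq_fintype_card]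
  have hk : numComp A ≤ Fintype.card V := numComp_le A
  have h3 : Nat.card (psiF (V := V) q A).ker = q ^ rank A := by
    have : q ^ rank A * q ^ numComp A = q ^ Fintype.card V := by
      rw [← pow_add]
      congr 1
      unfold rank
      omega
    exact Nat.eq_of_mul_eq_mul_right (pow_pos hqpos _) (by rw [h2, this])
  rw [range_bdA_eq_ker_psi q o hA hE ho, h3] at h1
  have hker_pos : 0 < Nat.card (bdA q o A).ker := Nat.card_pos
  have hle : rank A ≤ A.card := by
    have hpow : q ^ rank A ≤ q ^ A.card := by
      calc q ^ rank A ≤ Nat.card (bdA q o A).ker * q ^ rank A :=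
            Nat.le_mul_of_pos_left _ hker_pos
        _ = q ^ A.card := h1
    exact (Nat.pow_le_pow_iff_right (by omega : 1 < q)).mp hpow
  refine ⟨?_, hle⟩
  have : q ^ corank A * q ^ rank A = q ^ A.card := by
    rw [← pow_add]
    congr 1
    unfold corank
    omega
  exact Nat.eq_of_mul_eq_mul_right (pow_pos hqpos _) (by rw [h1, this])


def NZ (q : ℕ) (o : Sym2 V → V × V) (B : Finset (Sym2 V)) : ℕ :=
  Nat.card {f : Sym2 V → ZMod q // bdF q o f = 0 ∧ ∀ e, f e ≠ 0 ↔ e ∈ B}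

def NA (q : ℕ) (o : Sym2 V → V × V) (A : Finset (Sym2 V)) : ℕ :=
  Nat.card {f : Sym2 V → ZMod q // bdF q o f = 0 ∧ ∀ e ∉ A, f e = 0}

lemma NA_eq_card_ker (q : ℕ) (o : Sym2 V → V × V) (A : Finset (Sym2 V)) :
    NA q o A = Nat.card (bdA q o A).ker := by
  apply Nat.card_congr
  exact
    { toFun := fun f => ⟨⟨f.1, f.2.2⟩, f.2.1⟩
      invFun := fun g => ⟨g.1.1, g.2, g.1.2⟩
      left_inv := fun f => rfl
      right_inv := fun g => rfl }

lemma NA_eq_pow (q : ℕ) (hq : 2 ≤ q) (o : Sym2 V → V × V) {A E : Finset (Sym2 V)} (hA : A ⊆ E)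
    (hE : ∀ e ∈ E, ¬ e.IsDiag) (ho : ∀ e ∈ E, s((o e).1, (o e).2) = e) :
    NA q o A = q ^ corank A :=
  (NA_eq_card_ker q o A).trans (card_ker_bdA q hq o hA hE ho).1

lemma NA_eq_sum_NZ (q : ℕ) [NeZero q] (o : Sym2 V → V × V) (A : Finset (Sym2 V)) :
    NA q o A = ∑ B ∈ A.powerset, NZ q o B := by
  classical
  have hNA : NA q o A = (Finset.univ.filter
      (fun f : Sym2 V → ZMod q => bdF q o f = 0 ∧ ∀ e ∉ A, f e = 0)).card := by
    rw [NA, Nat.card_eq_fintype_card, Fintype.card_subtype]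
  have hNZ : ∀ B, NZ q o B = (Finset.univ.filter
      (fun f : Sym2 V → ZMod q => bdF q o f = 0 ∧ ∀ e, f e ≠ 0 ↔ e ∈ B)).card := by
    intro B
    rw [NZ, Nat.card_eq_fintype_card, Fintype.card_subtype]
  rw [hNA]
  have hsplit : (Finset.univ.filter
      (fun f : Sym2 V → ZMod q => bdF q o f = 0 ∧ ∀ e ∉ A, f e = 0))
      = A.powerset.biUnion (fun B => Finset.univ.filter
        (fun f : Sym2 V → ZMod q => bdF q o f = 0 ∧ ∀ e, f e ≠ 0 ↔ e ∈ B)) := by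
    ext f
    simp only [Finset.mem_filter, Finset.mem_univ, true_and, Finset.mem_biUnion,
      Finset.mem_powerset]
    constructor
    · rintro ⟨h1, h2⟩
      refine ⟨Finset.univ.filter (fun e => f e ≠ 0), ?_, h1, ?_⟩
      · intro e he
        rw [Finset.mem_filter] at he
        by_contra heA
        exact he.2 (h2 e heA)
      · intro e
        simp [Finset.mem_filter]
    · rintro ⟨B, hBA, h1, h2⟩
      refine ⟨h1, fun e heA => ?_⟩
      by_contra hne
      exact heA (hBA ((h2 e).mp hne))
  rw [hsplit, Finset.card_biUnion]
  · exact Finset.sum_congr rfl fun B _ => (hNZ B).symm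
  · intro B1 h1 B2 h2 hne
    apply Finset.disjoint_left.mpr
    intro f hf1 hf2
    rw [Finset.mem_filter] at hf1 hf2
    apply hne
    ext e
    rw [← hf1.2.2 e, hf2.2.2 e]


lemma sum_pow_neg_one_real {α : Type*} [DecidableEq α] (x : Finset α) :
    (∑ m ∈ x.powerset, (-1 : ℝ) ^ m.card) = if x = ∅ then 1 else 0 := by
  have h := Finset.sum_powerset_neg_one_pow_card (x := x)
  have h2 : (∑ m ∈ x.powerset, (-1 : ℝ) ^ m.card)
      = ((∑ m ∈ x.powerset, (-1 : ℤ) ^ m.card : ℤ) : ℝ) := by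
    push_cast
    rfl
  rw [h2, h]
  split_ifs <;> norm_num

lemma inner_sum {α : Type*} [DecidableEq α] (E B : Finset α) (hB : B ⊆ E) :
    (∑ A ∈ E.powerset, if B ⊆ A then ((-1 : ℝ)) ^ (E.card - A.card) else 0)
      = if B = E then 1 else 0 := by
  rw [← Finset.sum_filter]
  have hbij : (∑ A ∈ E.powerset.filter (fun A => B ⊆ A), ((-1 : ℝ)) ^ (E.card - A.card))
      = ∑ C ∈ (E \ B).powerset, (-1 : ℝ) ^ C.card := by
    refine Finset.sum_nbij' (fun A => E \ A) (fun C => E \ C) ?_ ?_ ?_ ?_ ?_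
    · intro A hA
      rw [Finset.mem_filter, Finset.mem_powerset] at hA
      rw [Finset.mem_powerset]
      exact Finset.sdiff_subset_sdiff (le_refl E) hA.2
    · intro C hC
      rw [Finset.mem_powerset] at hC
      rw [Finset.mem_filter, Finset.mem_powerset]
      refine ⟨Finset.sdiff_subset, ?_⟩
      rw [Finset.subset_sdiff]
      refine ⟨hB, ?_⟩
      rw [Finset.disjoint_left]
      intro x hxB hxC
      exact (Finset.mem_sdiff.mp (hC hxC)).2 hxB
    · intro A hA
      rw [Finset.mem_filter, Finset.mem_powerset] at hA
      exact Finset.sdiff_sdiff_eq_self hA.1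
    · intro C hC
      rw [Finset.mem_powerset] at hC
      exact Finset.sdiff_sdiff_eq_self (hC.trans Finset.sdiff_subset)
    · intro A hA
      rw [Finset.mem_filter, Finset.mem_powerset] at hA
      rw [Finset.card_sdiff_of_subset hA.1]
  rw [hbij, sum_pow_neg_one_real]
  congr 1
  simp only [Finset.sdiff_eq_empty_iff_subset, eq_iff_iff]
  exact ⟨fun h => le_antisymm hB h, fun h => h ▸ le_refl E⟩

lemma moebius {α : Type*} [DecidableEq α] (E : Finset α) (g : Finset α → ℝ) :
    (∑ A ∈ E.powerset, (-1 : ℝ) ^ (E.card - A.card) * (∑ B ∈ A.powerset, g B)) = g E := by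
  have hstep : ∀ A ∈ E.powerset,
      (-1 : ℝ) ^ (E.card - A.card) * (∑ B ∈ A.powerset, g B)
        = ∑ B ∈ E.powerset, (if B ⊆ A then ((-1 : ℝ)) ^ (E.card - A.card) else 0) * g B := by
    intro A hA
    rw [Finset.mem_powerset] at hA
    have hpow : A.powerset = E.powerset.filter (fun B => B ⊆ A) := by
      ext B
      simp only [Finset.mem_powerset, Finset.mem_filter]
      exact ⟨fun h => ⟨h.trans hA, h⟩, fun h => h.2⟩
    rw [Finset.mul_sum, hpow, Finset.sum_filter]
    refine Finset.sum_congr rfl fun B _ => ?_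
    split_ifs <;> simp
  rw [Finset.sum_congr rfl hstep, Finset.sum_comm]
  have : ∀ B ∈ E.powerset,
      (∑ A ∈ E.powerset, (if B ⊆ A then ((-1 : ℝ)) ^ (E.card - A.card) else 0) * g B)
        = (if B = E then 1 else 0) * g B := by
    intro B hB
    rw [← Finset.sum_mul, inner_sum E B (Finset.mem_powerset.mp hB)]
  rw [Finset.sum_congr rfl this]
  simp only [ite_mul, one_mul, zero_mul]
  rw [Finset.sum_ite_eq' E.powerset E g]
  simp [Finset.mem_powerset_self]


lemma sum_vanish {M : Type*} [AddCommMonoid M] (E : Finset (Sym2 V)) (G : Sym2 V → M)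
    (h : ∀ e ∉ E, G e = 0) : (∑ e, G e) = ∑ e : {e // e ∈ E}, G e.1 := by
  rw [Finset.sum_coe_sort E G]
  exact (Finset.sum_subset (Finset.subset_univ E) (fun e _ he => h e he)).symm

lemma supp_zero {q : ℕ} {g : Sym2 V → ZMod q} {E : Finset (Sym2 V)}
    (hg : ∀ e, g e ≠ 0 ↔ e ∈ E) : ∀ e ∉ E, g e = 0 := by
  intro e he
  by_contra hne
  exact he ((hg e).mp hne)

lemma hsum_ext (E : Finset (Sym2 V)) (q : ℕ) (f : {e // e ∈ E} → ZMod q) (hp : Sym2 V → V)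
    (v : V) :
    (∑ e, if hp e = v then (if h : e ∈ E then f ⟨e, h⟩ else 0) else 0)
      = ∑ e : {e // e ∈ E}, (if hp e.1 = v then f e else 0) := by
  rw [sum_vanish E _ (fun e he => by simp [he])]
  refine Finset.sum_congr rfl fun e _ => ?_
  by_cases h : hp e.1 = v <;> simp [h, e.2]


lemma sum_univ_eq {α M : Type*} [AddCommMonoid M] {i1 i2 : Fintype α} (F : α → M) :
    (@Finset.sum α M _ (@Finset.univ α i1) F) = @Finset.sum α M _ (@Finset.univ α i2) F := by
  cases Subsingleton.elim i1 i2
  rfl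

lemma sum_ite_indep {α M : Type*} [AddCommMonoid M] {i1 i2 : Fintype α} {P : α → Prop}
    {d1 : ∀ a, Decidable (P a)} {d2 : ∀ a, Decidable (P a)} (F : α → M) :
    (@Finset.sum α M _ (@Finset.univ α i1) (fun a => @ite M (P a) (d1 a) (F a) 0))
      = @Finset.sum α M _ (@Finset.univ α i2) (fun a => @ite M (P a) (d2 a) (F a) 0) := by
  cases Subsingleton.elim i1 i2
  refine Finset.sum_congr rfl fun a _ => ?_
  rw [Subsingleton.elim (d1 a) (d2 a)]

lemma flowCount_eq_NZ (E : Finset (Sym2 V)) (o : Sym2 V → V × V) (q : ℕ) :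
    flowCount E o q = NZ q o E := by
  apply Nat.card_congr
  exact
    { toFun := fun f => ⟨fun e => if h : e ∈ E then f.1 ⟨e, h⟩ else 0, by
        funext v
        show (∑ e, if (o e).1 = v then (if h : e ∈ E then f.1 ⟨e, h⟩ else 0) else 0)
            - (∑ e, if (o e).2 = v then (if h : e ∈ E then f.1 ⟨e, h⟩ else 0) else 0) = 0
        rw [hsum_ext E q f.1 (fun e => (o e).1) v, hsum_ext E q f.1 (fun e => (o e).2) v]
        rw [sub_eq_zero]
        exact (sum_ite_indep _).trans ((f.2.1 v).trans (sum_ite_indep _)), by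
        intro e
        by_cases h : e ∈ E
        · simpa [h] using f.2.2 ⟨e, h⟩
        · simp [h]⟩
      invFun := fun g => ⟨fun e => g.1 e.1, by
        have hg0 : ∀ e ∉ E, g.1 e = 0 := supp_zero g.2.2
        constructor
        · intro v
          have hb := congrFun g.2.1 v
          have hb' : (∑ e, if (o e).1 = v then g.1 e else 0)
              = (∑ e, if (o e).2 = v then g.1 e else 0) := by
            have : (∑ e, if (o e).1 = v then g.1 e else 0)
                - (∑ e, if (o e).2 = v then g.1 e else 0) = 0 := hb
            exact sub_eq_zero.mp this
          have h1 := sum_vanish E (fun e => if (o e).1 = v then g.1 e else 0)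
              (fun e he => by simp [hg0 e he])
          have h2 := sum_vanish E (fun e => if (o e).2 = v then g.1 e else 0)
              (fun e he => by simp [hg0 e he])
          exact (sum_ite_indep _).trans ((h1.symm.trans (hb'.trans h2)).trans (sum_ite_indep _))
        · intro e
          exact (g.2.2 e.1).mpr e.2⟩
      left_inv := by
        intro f
        apply Subtype.ext
        funext e
        simp [e.2]
      right_inv := by
        intro g
        have hg0 : ∀ e ∉ E, g.1 e = 0 := supp_zero g.2.2
        apply Subtype.ext
        funext e
        by_cases h : e ∈ E
        · simp [h]
        · simp [h, (hg0 e h).symm] }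


lemma neg_one_pow_sub {n k : ℕ} (h : k ≤ n) : ((-1 : ℝ)) ^ (n - k) = (-1) ^ n * (-1) ^ k := by
  have h1 : ((-1 : ℝ)) ^ (n - k) * (-1) ^ k = (-1) ^ n := by
    rw [← pow_add, Nat.sub_add_cancel h]
  have hk : ((-1 : ℝ)) ^ k * (-1) ^ k = 1 := by
    rw [← pow_add]
    exact Even.neg_one_pow ⟨k, rfl⟩
  calc ((-1 : ℝ)) ^ (n - k) = (-1) ^ (n - k) * ((-1) ^ k * (-1) ^ k) := by rw [hk, mul_one]
    _ = (-1) ^ n * (-1) ^ k := by rw [← mul_assoc, h1]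

end FlowAux

/-- The flow polynomial is an evaluation of the Tutte polynomial: for a finite connected
graph `G` and integer `q ≥ 2`,
`C_G(q) = (-1)^{|E|-|V|+1} T_G(0, 1-q) = (-1)^{|E|} Σ_{A⊆E} (-1)^{r(A)} (-q)^{c(A)}`. -/
theorem flow_polynomial_eq_tutte {V : Type} [Fintype V] [DecidableEq V]
    (E : Finset (Sym2 V)) (hE : ∀ e ∈ E, ¬ e.IsDiag)
    (hconn : (SimpleGraph.fromEdgeSet (E : Set (Sym2 V))).Connected)
    (o : Sym2 V → V × V) (ho : ∀ e ∈ E, s((o e).1, (o e).2) = e)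
    (q : ℕ) (hq : 2 ≤ q) :
    ((flowCount E o q : ℝ)
        = (-1) ^ (E.card + 1 - Fintype.card V) * tutte E 0 (1 - (q : ℝ))) ∧
    ((flowCount E o q : ℝ)
        = (-1) ^ E.card *
          ∑ A ∈ E.powerset, (-1 : ℝ) ^ rank A * (-(q : ℝ)) ^ corank A) := by
  haveI : NeZero q := ⟨by omega⟩
  have hVne : Nonempty V := hconn.nonempty
  have hV1 : 1 ≤ Fintype.card V := Fintype.card_pos
  have hcompE : numComp E = 1 := by
    rw [numComp, Nat.card_eq_one_iff_unique]
    refine ⟨hconn.preconnected.subsingleton_connectedComponent, ?_⟩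
    exact ⟨(SimpleGraph.fromEdgeSet (E : Set (Sym2 V))).connectedComponentMk
      (Classical.arbitrary V)⟩
  have hrankE_le : rank E ≤ E.card := (FlowAux.card_ker_bdA q hq o (le_refl E) hE ho).2
  have hVle : Fintype.card V - 1 ≤ E.card := by
    have : rank E = Fintype.card V - numComp E := rfl
    omega
  have hNZ : (flowCount E o q : ℝ)
      = ∑ A ∈ E.powerset, (-1 : ℝ) ^ (E.card - A.card) * (q : ℝ) ^ corank A := by
    have hm := FlowAux.moebius E (fun B => (FlowAux.NZ q o B : ℝ))
    rw [FlowAux.flowCount_eq_NZ, ← hm]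
    refine Finset.sum_congr rfl fun A hA => ?_
    congr 1
    rw [← Nat.cast_sum, ← FlowAux.NA_eq_sum_NZ q o A,
      FlowAux.NA_eq_pow q hq o (Finset.mem_powerset.mp hA) hE ho]
    push_cast
    rfl
  have h2 : (flowCount E o q : ℝ)
      = (-1) ^ E.card * ∑ A ∈ E.powerset, (-1 : ℝ) ^ rank A * (-(q : ℝ)) ^ corank A := by
    rw [hNZ, Finset.mul_sum]
    refine Finset.sum_congr rfl fun A hA => ?_
    have hAE : A ⊆ E := Finset.mem_powerset.mp hA
    have hcard : A.card ≤ E.card := Finset.card_le_card hAE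
    have hrk : rank A ≤ A.card := (FlowAux.card_ker_bdA q hq o hAE hE ho).2
    have hrc : rank A + corank A = A.card := by
      unfold corank
      omega
    rw [neg_pow, FlowAux.neg_one_pow_sub hcard, ← hrc, pow_add]
    ring
  refine ⟨?_, h2⟩
  rw [h2]
  have htu : tutte E 0 (1 - (q : ℝ))
      = (-1) ^ (Fintype.card V - 1)
        * ∑ A ∈ E.powerset, (-1 : ℝ) ^ rank A * (-(q : ℝ)) ^ corank A := by
    rw [tutte, whitney]
    have h01 : (0 : ℝ) - 1 = -1 := by norm_num
    have hv : (1 - (q : ℝ)) - 1 = -(q : ℝ) := by ring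
    rw [h01, inv_neg_one, hv]
  rw [htu, ← mul_assoc, ← pow_add]
  congr 2
  omega
end
end
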